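/- arXiv:1410.2194 — 5 statements merged into one kernel-verified Lean document; each statement's English description precedes it below -/
import Mathlib

section
/- A finite semigroup S is not Mal'cev nilpotent if and only if there exist a positive integer m, distinct elements x, y ∈ S, and elements w₁, w₂, …, w_m ∈ S¹ such that x = λ_m(x, y, w₁, …, w_m) and y = ρ_m(x, y, w₁, …, w_m). -/
/-! Common definitions: Mal'cev nilpotency, the relations η_n, η, the congruence η*,
Rees matrix semigroups (with and without zero), regularity, CS-diagonality,
the row relation ~, ideals, principal series and Rees factor isomorphisms. -/

/-- The pair `(λ_n, ρ_n)` of Mal'cev words in a monoid, with `λ₀ = x`, `ρ₀ = y`,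
`λ_{k+1} = λ_k * z (k+1) * ρ_k` and `ρ_{k+1} = ρ_k * z (k+1) * λ_k`. -/
def malcev {M : Type*} [Monoid M] (x y : M) (z : ℕ → M) : ℕ → M × M
  | 0 => (x, y)
  | k + 1 =>
      ((malcev x y z k).1 * z (k + 1) * (malcev x y z k).2,
       (malcev x y z k).2 * z (k + 1) * (malcev x y z k).1)

/-- A semigroup `S` is Mal'cev nilpotent if for some positive `n`,
`λ_n(a,b,c₁,…,c_n) = ρ_n(a,b,c₁,…,c_n)` for all `a b ∈ S` and all `cᵢ ∈ S¹`,
where `S¹ = WithOne S`. -/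
def MalcevNilpotent (S : Type*) [Semigroup S] : Prop :=
  ∃ n : ℕ, 0 < n ∧ ∀ (a b : S) (z : ℕ → WithOne S),
    (malcev (a : WithOne S) (b : WithOne S) z n).1 =
    (malcev (a : WithOne S) (b : WithOne S) z n).2

/-- The relation `η_n` on a semigroup `S`: `η₁` is the diagonal, and for `n > 1`,
`x η_n y` iff there are `z₁, …, z_n ∈ S¹` with `x = λ_n(x,y,z₁,…,z_n)` and
`y = ρ_n(x,y,z₁,…,z_n)`. -/
def etaN (S : Type*) [Semigroup S] (n : ℕ) (x y : S) : Prop :=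
  (n = 1 ∧ x = y) ∨
  (1 < n ∧ ∃ z : ℕ → WithOne S,
    (x : WithOne S) = (malcev (x : WithOne S) (y : WithOne S) z n).1 ∧
    (y : WithOne S) = (malcev (x : WithOne S) (y : WithOne S) z n).2)

/-- `η`, the transitive closure of the union of the relations `η_n`, `n ≥ 1`. -/
def eta (S : Type*) [Semigroup S] : S → S → Prop :=
  Relation.TransGen (fun x y => ∃ n, 1 ≤ n ∧ etaN S n x y)

/-- `η*`, the smallest congruence on `S` containing `η`. -/
def etaStar (S : Type*) [Semigroup S] : Con S :=
  conGen (eta S)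

/-- A semigroup is an inverse semigroup if every element has exactly one inverse. -/
def IsInverseSemigroup (S : Type*) [Semigroup S] : Prop :=
  ∀ x : S, ∃! y : S, x * y * x = x ∧ y * x * y = y

/-- A semigroup is completely regular if every element lies in a subgroup:
for every `a` there is `b` with `aba = a`, `ab = ba` and `bab = b`. -/
def IsCompletelyRegular (S : Type*) [Semigroup S] : Prop :=
  ∀ a : S, ∃ b : S, a * b * a = a ∧ a * b = b * a ∧ b * a * b = b

/-- A (possibly empty) two-sided ideal of a semigroup. -/
def IsIdeal (S : Type*) [Semigroup S] (I : Set S) : Prop :=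
  ∀ s : S, ∀ x ∈ I, s * x ∈ I ∧ x * s ∈ I

/-- The Rees matrix semigroup `M⁰(G, n, m; P)` with zero `theta`; the sandwich
matrix entry `P j i : Option G` is `none` when the entry is `θ`. -/
inductive ReesMatrix (G : Type*) (n m : ℕ) (P : Fin m → Fin n → Option G) where
  | theta : ReesMatrix G n m P
  | elem (g : G) (i : Fin n) (j : Fin m) : ReesMatrix G n m P

namespace ReesMatrix

variable {G : Type*} [Group G] {n m : ℕ} {P : Fin m → Fin n → Option G}

/-- Multiplication: `(g;i,j)(h;k,l) = (g p_{j,k} h; i, l)` if `p_{j,k} ≠ θ`,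
and all other products are `θ`. -/
def mul : ReesMatrix G n m P → ReesMatrix G n m P → ReesMatrix G n m P
  | elem g i j, elem h k l =>
      match P j k with
      | some p => elem (g * p * h) i l
      | none => theta
  | _, _ => theta

instance : Semigroup (ReesMatrix G n m P) where
  mul := mul
  mul_assoc a b c := by
    show mul (mul a b) c = mul a (mul b c)
    rcases a with _ | ⟨g, i, j⟩ <;> rcases b with _ | ⟨h, k, l⟩ <;>
      rcases c with _ | ⟨f, r, s⟩
    all_goals try rfl
    · rcases hjk : P j k with _ | p <;> simp [mul, hjk]
    · rcases hjk : P j k with _ | p <;> rcases hlr : P l r with _ | q <;>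
        simp [mul, hjk, hlr, mul_assoc]

theorem mul_def (a b : ReesMatrix G n m P) : a * b = mul a b := rfl

instance [Finite G] : Finite (ReesMatrix G n m P) := by
  have := Fintype.ofFinite G
  exact Finite.of_surjective
    (fun x : Option (G × Fin n × Fin m) =>
      match x with
      | none => (theta : ReesMatrix G n m P)
      | some (g, i, j) => elem g i j)
    (by rintro (_ | ⟨g, i, j⟩)
        · exact ⟨none, rfl⟩
        · exact ⟨some (g, i, j), rfl⟩)

end ReesMatrix

/-- `P` is regular: every row and every column of the sandwich matrix has a
nonzero entry. -/
def IsRegularSandwich {G : Type*} {n m : ℕ} (P : Fin m → Fin n → Option G) : Prop :=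
  (∀ i : Fin n, ∃ j : Fin m, P j i ≠ none) ∧ (∀ j : Fin m, ∃ i : Fin n, P j i ≠ none)

/-- `P` is CS-diagonal: whenever `p_{r,t}`, `p_{r',t}` and `p_{r,t'}` are all
nonzero, so is `p_{r',t'}`. -/
def IsCSDiagonal {G : Type*} {n m : ℕ} (P : Fin m → Fin n → Option G) : Prop :=
  ∀ (r r' : Fin m) (t t' : Fin n),
    P r t ≠ none → P r' t ≠ none → P r t' ≠ none → P r' t' ≠ none

/-- The relation `~` on rows: `i ~ i'` iff some column `j` has `p_{j,i} ≠ θ`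
and `p_{j,i'} ≠ θ`. -/
def rowRel {G : Type*} {n m : ℕ} (P : Fin m → Fin n → Option G) (i i' : Fin n) : Prop :=
  ∃ j : Fin m, P j i ≠ none ∧ P j i' ≠ none

/-- The completely simple Rees matrix semigroup `M(G, n, m; P)` (without zero),
all sandwich entries lying in `G`. -/
inductive ReesMatrixCS (G : Type*) (n m : ℕ) (P : Fin m → Fin n → G) where
  | elem (g : G) (i : Fin n) (j : Fin m) : ReesMatrixCS G n m P

namespace ReesMatrixCS

variable {G : Type*} [Group G] {n m : ℕ} {P : Fin m → Fin n → G}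

instance : Semigroup (ReesMatrixCS G n m P) where
  mul a b := match a, b with
    | elem g i j, elem h k l => elem (g * P j k * h) i l
  mul_assoc a b c := by
    rcases a with ⟨g, i, j⟩; rcases b with ⟨h, k, l⟩; rcases c with ⟨f, r, s⟩
    show elem _ _ _ = elem _ _ _
    simp [mul_assoc]

instance [Finite G] : Finite (ReesMatrixCS G n m P) := by
  have := Fintype.ofFinite G
  exact Finite.of_surjective
    (fun x : G × Fin n × Fin m => elem x.1 x.2.1 x.2.2)
    (by rintro ⟨g, i, j⟩; exact ⟨(g, i, j), rfl⟩)

end ReesMatrixCS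

/-- A principal series of a finite semigroup `S`:
`S = C 1 ⊃ C 2 ⊃ … ⊃ C o ⊃ C (o+1) = ∅`, each `C p` an ideal of `S` with
no ideal of `S` strictly between consecutive terms. -/
structure PrincipalSeries (S : Type*) [Semigroup S] where
  o : ℕ
  ho : 1 ≤ o
  C : ℕ → Set S
  first : C 1 = Set.univ
  last : C (o + 1) = ∅
  isIdeal : ∀ p, 1 ≤ p → p ≤ o → IsIdeal S (C p)
  strict : ∀ p, 1 ≤ p → p ≤ o → C (p + 1) ⊂ C p
  max : ∀ p, 1 ≤ p → p ≤ o → ∀ I : Set S, IsIdeal S I →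
    C (p + 1) ⊆ I → I ⊆ C p → I = C (p + 1) ∨ I = C p

/-- `f` realises the Rees factor `A/B` (the Rees quotient of `A` by the ideal `B`;
if `B = ∅` the factor is `A` itself) as the Rees matrix semigroup with zero
`M⁰(H, n', m'; Q)`. -/
def IsReesFactorM0 {S : Type*} [Semigroup S] (A B : Set S)
    {H : Type*} [Group H] {n' m' : ℕ} (Q : Fin m' → Fin n' → Option H)
    (f : S → ReesMatrix H n' m' Q) : Prop :=
  (∀ x ∈ A, ∀ y ∈ A, f (x * y) = f x * f y) ∧
  ((B = ∅ ∧ Set.BijOn f A Set.univ) ∨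
   (B ≠ ∅ ∧ (∀ x ∈ B, f x = ReesMatrix.theta) ∧
     (∀ x ∈ A \ B, f x ≠ ReesMatrix.theta) ∧
     Set.InjOn f (A \ B) ∧
     (∀ w : ReesMatrix H n' m' Q, w ≠ ReesMatrix.theta → ∃ x ∈ A \ B, f x = w)))

/-- `f` realises `A` as the completely simple Rees matrix semigroup
`M(H, n', m'; Q)` (without zero). -/
def IsReesFactorCS {S : Type*} [Semigroup S] (A : Set S)
    {H : Type*} [Group H] {n' m' : ℕ} (Q : Fin m' → Fin n' → H)
    (f : S → ReesMatrixCS H n' m' Q) : Prop :=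
  (∀ x ∈ A, ∀ y ∈ A, f (x * y) = f x * f y) ∧ Set.BijOn f A Set.univ

/-!
In a finite semigroup the sequence of pairs `(λ_k, ρ_k)` is eventually periodic. If `S` is not
Mal'cev nilpotent, some sequence has `λ_k ≠ ρ_k` beyond the first repetition, and the pair at the
start of the cycle is a pair `x ≠ y` reproduced by the words of the cycle. Conversely, such a pair
is reproduced after every multiple of `m` steps by repeating `w₁, …, w_m` periodically, so
`λ_n = ρ_n` can never hold for all choices.
-/

section Monoid

variable {M : Type*} [Monoid M]

lemma malcev_congr (x y : M) {z z' : ℕ → M} {n : ℕ}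
    (h : ∀ t, 1 ≤ t → t ≤ n → z t = z' t) :
    malcev x y z n = malcev x y z' n := by
  induction n with
  | zero => rfl
  | succ k ih =>
    rw [malcev, malcev, ih fun t h1 h2 => h t h1 (by omega), h (k + 1) (by omega) le_rfl]

lemma malcev_add (x y : M) (z : ℕ → M) (i k : ℕ) :
    malcev x y z (i + k) =
      malcev (malcev x y z i).1 (malcev x y z i).2 (fun t => z (i + t)) k := by
  induction k with
  | zero => rfl
  | succ k ih => rw [← add_assoc, malcev, malcev, ih]; rfl

lemma malcev_fst_eq_snd_of_le (x y : M) (z : ℕ → M) {n k : ℕ} (hnk : n ≤ k)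
    (h : (malcev x y z n).1 = (malcev x y z n).2) :
    (malcev x y z k).1 = (malcev x y z k).2 := by
  induction k, hnk using Nat.le_induction with
  | base => exact h
  | succ k _ ih => simp only [malcev, ih]

lemma malcev_nat_mul_of_periodic {x y : M} {z : ℕ → M} {m : ℕ} (hz : Function.Periodic z m)
    (hfix : malcev x y z m = (x, y)) (k : ℕ) : malcev x y z (k * m) = (x, y) := by
  induction k with
  | zero => simp [malcev]
  | succ k ih =>
    have hshift : (fun t => z (k * m + t)) = z := funext fun t => by
      rw [add_comm]; exact (hz.nat_mul k) t
    rw [Nat.succ_mul, malcev_add, ih, hshift, hfix]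

lemma exists_malcev_nat_mul_eq_of_eq {x y : M} {w : ℕ → M} {m : ℕ} (hm : 0 < m)
    (hfix : malcev x y w m = (x, y)) : ∃ w' : ℕ → M, ∀ k, malcev x y w' (k * m) = (x, y) := by
  -- `t + m - 1` rather than `t - 1`, so that truncated subtraction does not break periodicity at 0
  let w' : ℕ → M := fun t => w ((t + m - 1) % m + 1)
  have hperiodic : Function.Periodic w' m := fun t => by
    simp only [w', show t + m + m - 1 = t + m - 1 + m by omega, Nat.add_mod_right]
  have hagree : malcev x y w' m = malcev x y w m := malcev_congr x y fun t h1 h2 => by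
    simp only [w', show t + m - 1 = t - 1 + m by omega, Nat.add_mod_right,
      Nat.mod_eq_of_lt (show t - 1 < m by omega), Nat.sub_add_cancel h1]
  exact ⟨w', malcev_nat_mul_of_periodic hperiodic (hagree.trans hfix)⟩

lemma malcev_shift_eq_of_eq (x y : M) (z : ℕ → M) {i j : ℕ} (hij : i ≤ j)
    (h : malcev x y z i = malcev x y z j) :
    malcev (malcev x y z i).1 (malcev x y z i).2 (fun t => z (i + t)) (j - i) =
      malcev x y z i := by
  rw [← malcev_add, Nat.add_sub_cancel' hij, h]

end Monoid

instance {α : Type*} [Finite α] : Finite (WithOne α) :=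
  inferInstanceAs (Finite (Option α))

lemma exists_malcev_eq_coe {S : Type*} [Semigroup S] (a b : S) (z : ℕ → WithOne S) (k : ℕ) :
    ∃ s t : S, malcev (a : WithOne S) (b : WithOne S) z k = (↑s, ↑t) := by
  have hmul : ∀ (u v : S) (c : WithOne S), ∃ r : S, (u : WithOne S) * c * v = ↑r := by
    intro u v c
    induction c using WithOne.recOneCoe with
    | one => exact ⟨u * v, by simp⟩
    | coe c => exact ⟨u * c * v, by simp only [← WithOne.coe_mul]⟩
  induction k with
  | zero => exact ⟨a, b, rfl⟩
  | succ k ih =>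
    obtain ⟨s, t, h⟩ := ih
    obtain ⟨r, hr⟩ := hmul s t (z (k + 1))
    obtain ⟨r', hr'⟩ := hmul t s (z (k + 1))
    exact ⟨r, r', by rw [malcev, h, hr, hr']⟩

lemma exists_lt_le_card_eq_of_finite {α : Type*} [Finite α] (f : ℕ → α) :
    ∃ i j, i < j ∧ j ≤ Nat.card α ∧ f i = f j := by
  have := Fintype.ofFinite α
  obtain ⟨i, j, hne, h⟩ := Fintype.exists_ne_map_eq_of_card_lt
    (fun k : Fin (Nat.card α + 1) => f k) (by simp [Nat.card_eq_fintype_card])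
  rcases lt_or_gt_of_ne (Fin.val_ne_of_ne hne) with hlt | hlt
  · exact ⟨i, j, hlt, Nat.lt_succ_iff.mp j.isLt, h⟩
  · exact ⟨j, i, hlt, Nat.lt_succ_iff.mp i.isLt, h.symm⟩

/-- A finite semigroup `S` is not Mal'cev nilpotent iff there exist a
positive integer `m`, distinct `x y ∈ S` and `w₁, …, w_m ∈ S¹` with
`x = λ_m(x,y,w₁,…,w_m)` and `y = ρ_m(x,y,w₁,…,w_m)`. -/
theorem not_malcevNilpotent_iff (S : Type*) [Semigroup S] [Finite S] :
    ¬ MalcevNilpotent S ↔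
      ∃ m : ℕ, 0 < m ∧ ∃ x y : S, x ≠ y ∧ ∃ w : ℕ → WithOne S,
        (x : WithOne S) = (malcev (x : WithOne S) (y : WithOne S) w m).1 ∧
        (y : WithOne S) = (malcev (x : WithOne S) (y : WithOne S) w m).2 := by
  constructor
  · intro hnil
    set N := Nat.card (WithOne S × WithOne S)
    obtain ⟨a, b, z, hne⟩ : ∃ (a b : S) (z : ℕ → WithOne S),
        (malcev (a : WithOne S) b z (N + 1)).1 ≠ (malcev (a : WithOne S) b z (N + 1)).2 := by
      by_contra! h
      exact hnil ⟨N + 1, N.succ_pos, h⟩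
    obtain ⟨i, j, hij, hjN, hcycle⟩ := exists_lt_le_card_eq_of_finite (malcev (a : WithOne S) b z)
    obtain ⟨s, t, hst⟩ := exists_malcev_eq_coe a b z i
    have hs_ne_t : s ≠ t := by
      rintro rfl
      exact hne (malcev_fst_eq_snd_of_le (n := i) _ _ z (by omega) (by rw [hst]))
    have hfix := malcev_shift_eq_of_eq _ _ z hij.le hcycle
    rw [hst] at hfix
    exact ⟨j - i, by omega, s, t, hs_ne_t, _, by rw [hfix], by rw [hfix]⟩
  · rintro ⟨m, hm, x, y, hxy, w, hx, hy⟩ ⟨n, -, hnil⟩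
    obtain ⟨w', hw'⟩ := exists_malcev_nat_mul_eq_of_eq hm (Prod.ext hx.symm hy.symm)
    have heq := malcev_fst_eq_snd_of_le _ _ w' (Nat.le_mul_of_pos_right n hm) (hnil x y w')
    rw [hw' n] at heq
    exact hxy (WithOne.coe_inj.mp heq)
end

section
/- Let M = M⁰(G,n,m;P) be a Rees matrix semigroup over a group G. If p_{j,i} ≠ θ and p_{j',i} ≠ θ for some row i and columns j, j', then (p_{j,i}⁻¹; i, j) η₂ (p_{j',i}⁻¹; i, j'); explicitly, taking z₁ = z₂ = 1 ∈ M¹ one has (p_{j,i}⁻¹;i,j) = λ₂((p_{j,i}⁻¹;i,j),(p_{j',i}⁻¹;i,j'),1,1) and (p_{j',i}⁻¹;i,j') = ρ₂((p_{j,i}⁻¹;i,j),(p_{j',i}⁻¹;i,j'),1,1). -/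
/-
Proof idea: for `x = (p⁻¹; i, j)` and `y = (q⁻¹; i, j')` the sandwich entries cancel, giving
`x y = y` and `y x = x`. For any such pair `λ₁ = x y = y` and `ρ₁ = y x = x`, so with
`z₁ = z₂ = 1` the Mal'cev words return to `(x, y)` after two steps.
-/

theorem malcev_one_two_of_mul_eq {M : Type*} [Monoid M] {x y : M}
    (hxy : x * y = y) (hyx : y * x = x) :
    malcev x y (fun _ => 1) 2 = (x, y) := by
  simp only [malcev, mul_one, hxy, hyx]

section Semigroup

variable {S : Type*} [Semigroup S] {x y : S}

theorem malcev_coe_one_two_of_mul_eq (hxy : x * y = y) (hyx : y * x = x) :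
    malcev (x : WithOne S) y (fun _ => 1) 2 = ((x : WithOne S), (y : WithOne S)) :=
  malcev_one_two_of_mul_eq (by rw [← WithOne.coe_mul, hxy]) (by rw [← WithOne.coe_mul, hyx])

theorem etaN_two_of_mul_eq (hxy : x * y = y) (hyx : y * x = x) : etaN S 2 x y := by
  have h := malcev_coe_one_two_of_mul_eq hxy hyx
  exact Or.inr ⟨one_lt_two, fun _ => 1, by rw [h], by rw [h]⟩

end Semigroup

namespace ReesMatrix

variable {G : Type*} [Group G] {n m : ℕ} {P : Fin m → Fin n → Option G}

theorem elem_mul_elem_of_eq_some {j : Fin m} {k : Fin n} {p : G} (hp : P j k = some p)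
    (g h : G) (i : Fin n) (l : Fin m) :
    (elem g i j : ReesMatrix G n m P) * elem h k l = elem (g * p * h) i l := by
  simp only [mul_def, mul, hp]

theorem elem_inv_mul_elem_of_eq_some {i : Fin n} {j : Fin m} {p : G} (hp : P j i = some p)
    (h : G) (l : Fin m) :
    (elem p⁻¹ i j : ReesMatrix G n m P) * elem h i l = elem h i l := by
  rw [elem_mul_elem_of_eq_some hp, inv_mul_cancel, one_mul]

end ReesMatrix

/-- In a Rees matrix semigroup `M⁰(G,n,m;P)`, if `p_{j,i} ≠ θ` and
`p_{j',i} ≠ θ`, then `(p_{j,i}⁻¹;i,j) η₂ (p_{j',i}⁻¹;i,j')`, witnessed by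
`z₁ = z₂ = 1`. -/
theorem etaTwo_of_same_row {G : Type*} [Group G] {n m : ℕ}
    {P : Fin m → Fin n → Option G} (i : Fin n) (j j' : Fin m) (p q : G)
    (hj : P j i = some p) (hj' : P j' i = some q) :
    ((ReesMatrix.elem p⁻¹ i j : ReesMatrix G n m P) : WithOne (ReesMatrix G n m P)) =
      (malcev ((ReesMatrix.elem p⁻¹ i j : ReesMatrix G n m P) : WithOne (ReesMatrix G n m P))
        ((ReesMatrix.elem q⁻¹ i j' : ReesMatrix G n m P) : WithOne (ReesMatrix G n m P))
        (fun _ => 1) 2).1 ∧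
    ((ReesMatrix.elem q⁻¹ i j' : ReesMatrix G n m P) : WithOne (ReesMatrix G n m P)) =
      (malcev ((ReesMatrix.elem p⁻¹ i j : ReesMatrix G n m P) : WithOne (ReesMatrix G n m P))
        ((ReesMatrix.elem q⁻¹ i j' : ReesMatrix G n m P) : WithOne (ReesMatrix G n m P))
        (fun _ => 1) 2).2 ∧
    etaN (ReesMatrix G n m P) 2
      (ReesMatrix.elem p⁻¹ i j) (ReesMatrix.elem q⁻¹ i j') := by
  have hxy := ReesMatrix.elem_inv_mul_elem_of_eq_some hj q⁻¹ j'
  have hyx := ReesMatrix.elem_inv_mul_elem_of_eq_some hj' p⁻¹ j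
  have hmalcev := malcev_coe_one_two_of_mul_eq hxy hyx
  exact ⟨by rw [hmalcev], by rw [hmalcev], etaN_two_of_mul_eq hxy hyx⟩
end

section
/- Let M = M⁰(G,n,m;P) be a finite regular Rees matrix semigroup. If M is not CS-diagonal, then every element of M is η*-related to θ; equivalently, the quotient M/η* is the trivial one-element semigroup. -/
/-! A non-CS-diagonal pattern `p_{r,t}, p_{r',t}, p_{r,t'} ≠ θ = p_{r',t'}` yields two
elements `x = (p_{r',t}⁻¹; t, r')` and `y = (p_{r,t'}⁻¹; t', r)` that are `η₂`-related
through `z = (p_{r,t}⁻¹; t, r)`. Right multiplication by any `w = (g; t', j)` sends `x` to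
`θ` but fixes `w` on `y`, so `w η* θ`. By regularity every element factors as
`(h; i, l) · (1; t', j)`, so the whole of `M` collapses onto `θ`. -/

theorem etaStar_of_etaN {S : Type*} [Semigroup S] {k : ℕ} {x y : S} (hk : 1 ≤ k)
    (h : etaN S k x y) : etaStar S x y :=
  ConGen.Rel.of _ _ (Relation.TransGen.single ⟨k, hk, h⟩)

theorem etaN_two_of_eq {S : Type*} [Semigroup S] {x y z : S}
    (hx : x = x * z * y * z * (y * z * x)) (hy : y = y * z * x * z * (x * z * y)) :
    etaN S 2 x y := by
  refine Or.inr ⟨one_lt_two, fun _ => (z : WithOne S), ?_, ?_⟩ <;>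
    simp only [malcev, ← WithOne.coe_mul, WithOne.coe_inj]
  exacts [hx, hy]

theorem Con.subsingleton_quotient_of_forall_rel {M : Type*} [Mul M] (c : Con M) (a : M)
    (h : ∀ x, c x a) : Subsingleton c.Quotient :=
  ⟨fun u v => Quotient.inductionOn₂' u v fun x y => c.eq.mpr (c.trans (h x) (c.symm (h y)))⟩

namespace ReesMatrix

variable {G : Type*} [Group G] {n m : ℕ} {P : Fin m → Fin n → Option G}

theorem elem_mul_elem_of_eq_none {j : Fin m} {k : Fin n} (hp : P j k = none)
    (g h : G) (i : Fin n) (l : Fin m) :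
    (elem g i j : ReesMatrix G n m P) * elem h k l = theta := by
  simp only [mul_def, mul, hp]

@[simp]
theorem mul_theta (a : ReesMatrix G n m P) : a * theta = theta := by
  cases a <;> rfl

theorem etaStar_elem_theta_of_eq_none {r r' : Fin m} {t t' : Fin n} {a b c : G}
    (hrt : P r t = some a) (hr't : P r' t = some b) (hrt' : P r t' = some c)
    (hr't' : P r' t' = none) (g : G) (j : Fin m) :
    etaStar (ReesMatrix G n m P) (elem g t' j) theta := by
  have hxy : etaStar (ReesMatrix G n m P) (elem b⁻¹ t r') (elem c⁻¹ t' r) := by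
    refine etaStar_of_etaN one_le_two (etaN_two_of_eq (z := elem a⁻¹ t r) ?_ ?_) <;>
      simp only [elem_mul_elem_of_eq_some hrt, elem_mul_elem_of_eq_some hr't,
        elem_mul_elem_of_eq_some hrt', elem.injEq, and_true] <;> group
  have hw := (etaStar _).mul hxy ((etaStar _).refl (elem g t' j))
  rw [elem_mul_elem_of_eq_none hr't', elem_mul_elem_of_eq_some hrt',
    inv_mul_cancel, one_mul] at hw
  exact hw.symm

theorem con_rel_theta_of_rel_elem_theta (c : Con (ReesMatrix G n m P)) {k : Fin n}
    (hk : ∃ j, P j k ≠ none) (h : ∀ g j, c (elem g k j) theta) (u : ReesMatrix G n m P) :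
    c u theta := by
  rcases u with _ | ⟨g, i, j⟩
  · exact c.refl _
  obtain ⟨l, hl⟩ := hk
  obtain ⟨q, hq⟩ := Option.ne_none_iff_exists'.mp hl
  have hu := c.mul (c.refl (elem (g * q⁻¹) i l)) (h 1 j)
  rwa [elem_mul_elem_of_eq_some hq, mul_theta, inv_mul_cancel_right, mul_one] at hu

end ReesMatrix

theorem etaStar_theta_of_not_csDiagonal_general (G : Type*) [Group G]
    (n m : ℕ) (P : Fin m → Fin n → Option G)
    (hreg : IsRegularSandwich P) (hnot : ¬ IsCSDiagonal P) :
    (∀ x : ReesMatrix G n m P,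
      etaStar (ReesMatrix G n m P) x ReesMatrix.theta) ∧
    Subsingleton (etaStar (ReesMatrix G n m P)).Quotient := by
  simp only [IsCSDiagonal, not_forall, not_not] at hnot
  obtain ⟨r, r', t, t', hrt, hr't, hrt', hr't'⟩ := hnot
  obtain ⟨a, ha⟩ := Option.ne_none_iff_exists'.mp hrt
  obtain ⟨b, hb⟩ := Option.ne_none_iff_exists'.mp hr't
  obtain ⟨c, hc⟩ := Option.ne_none_iff_exists'.mp hrt'
  have hθ := ReesMatrix.con_rel_theta_of_rel_elem_theta _ (hreg.1 t')
    (ReesMatrix.etaStar_elem_theta_of_eq_none ha hb hc hr't')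
  exact ⟨hθ, Con.subsingleton_quotient_of_forall_rel _ _ hθ⟩

/-- If a finite regular Rees matrix semigroup `M⁰(G,n,m;P)` is not
CS-diagonal, then every element is `η*`-related to `θ`; equivalently, `M/η*` is
the trivial one-element semigroup. -/
theorem etaStar_theta_of_not_csDiagonal (G : Type*) [Group G] [Finite G]
    (n m : ℕ) (hn : 0 < n) (hm : 0 < m) (P : Fin m → Fin n → Option G)
    (hreg : IsRegularSandwich P) (hnot : ¬ IsCSDiagonal P) :
    (∀ x : ReesMatrix G n m P,
      etaStar (ReesMatrix G n m P) x ReesMatrix.theta) ∧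
    Subsingleton (etaStar (ReesMatrix G n m P)).Quotient :=
  etaStar_theta_of_not_csDiagonal_general G n m P hreg hnot
end

section
/- Let φ : S → L be a semigroup homomorphism from a semigroup S to a semilattice L. If x η_n y for some n ≥ 1, then φ(x) = φ(y). Consequently, x η* y implies φ(x) = φ(y). -/
/-! Extend `φ` to a monoid homomorphism `S¹ → L¹`; it maps Mal'cev words to Mal'cev
words. In the commutative monoid `L¹`, `λ_{k+1} = λ_k z_{k+1} ρ_k` and `ρ_{k+1} = ρ_k z_{k+1} λ_k`
coincide, so `x = λ_n` and `y = ρ_n` have the same image. Hence `η` lies in the kernel congruence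
of `φ`, and so does the congruence `η*` it generates. -/

theorem map_malcev {M N : Type*} [Monoid M] [Monoid N] (f : M →* N) (x y : M) (z : ℕ → M)
    (n : ℕ) : Prod.map f f (malcev x y z n) = malcev (f x) (f y) (f ∘ z) n := by
  induction n with
  | zero => rfl
  | succ k ih =>
    simp only [malcev, ← ih, Prod.map_fst, Prod.map_snd, Prod.map_apply, Function.comp, map_mul]

theorem malcev_fst_eq_snd {M : Type*} [CommMonoid M] (x y : M) (z : ℕ → M) {n : ℕ}
    (hn : n ≠ 0) : (malcev x y z n).1 = (malcev x y z n).2 := by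
  obtain ⟨k, rfl⟩ := Nat.exists_eq_succ_of_ne_zero hn
  simp only [malcev]
  rw [mul_comm, ← mul_assoc, mul_right_comm]

section SemilatticeHom

variable {S L : Type*} [Semigroup S] [CommSemigroup L]

theorem etaN.map_eq (φ : S →ₙ* L) {n : ℕ} {x y : S} (h : etaN S n x y) : φ x = φ y := by
  obtain ⟨-, rfl⟩ | ⟨hn, z, hx, hy⟩ := h
  · rfl
  set ψ := WithOne.mapMulHom φ
  set w := malcev (x : WithOne S) y z n
  have hw : (Prod.map ψ ψ w).1 = (Prod.map ψ ψ w).2 := by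
    rw [map_malcev]
    exact malcev_fst_eq_snd _ _ _ (by omega)
  apply WithOne.coe_injective
  rw [← WithOne.mapMulHom_coe, ← WithOne.mapMulHom_coe, hx, hy]
  exact hw

theorem eta_le_ker (φ : S →ₙ* L) : eta S ≤ Con.ker φ := fun _ _ h => by
  induction h with
  | single h => obtain ⟨n, -, h⟩ := h; exact h.map_eq φ
  | tail _ h ih => obtain ⟨n, -, h⟩ := h; exact (Con.ker φ).trans ih (h.map_eq φ)

theorem etaStar_le_ker (φ : S →ₙ* L) : etaStar S ≤ Con.ker φ :=
  Con.conGen_le.mpr (eta_le_ker φ)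

end SemilatticeHom

theorem semilattice_hom_eq_of_eta_general {S L : Type*} [Semigroup S] [Semigroup L]
    (hcomm : ∀ a b : L, a * b = b * a)
    (φ : S →ₙ* L) :
    (∀ n : ℕ, 1 ≤ n → ∀ x y : S, etaN S n x y → φ x = φ y) ∧
    (∀ x y : S, etaStar S x y → φ x = φ y) := by
  let _ : CommSemigroup L := { ‹Semigroup L› with mul_comm := hcomm }
  exact ⟨fun _ _ _ _ h => h.map_eq φ, fun _ _ h => etaStar_le_ker φ h⟩

/-- If `φ : S → L` is a homomorphism to a semilattice (a commutative
idempotent semigroup), then `x η_n y` implies `φ x = φ y`, and consequently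
`x η* y` implies `φ x = φ y`. -/
theorem semilattice_hom_eq_of_eta {S L : Type*} [Semigroup S] [Semigroup L]
    (hcomm : ∀ a b : L, a * b = b * a) (hidem : ∀ a : L, a * a = a)
    (φ : S →ₙ* L) :
    (∀ n : ℕ, 1 ≤ n → ∀ x y : S, etaN S n x y → φ x = φ y) ∧
    (∀ x y : S, etaStar S x y → φ x = φ y) :=
  semilattice_hom_eq_of_eta_general hcomm φ
end

section
/- Let S be a finite semigroup with a principal series S = S₁ ⊃ S₂ ⊃ … ⊃ S_o ⊃ S_{o+1} = ∅, and suppose the principal factor S_p/S_{p+1} is non-null (S_p S_p ⊄ S_{p+1}). If some element a ∈ S_p∖S_{p+1} is η*-related to an element of S_{p+1}, then every element of S_p∖S_{p+1} is η*-related to some element of S_{p+1}. -/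
/-! The elements of `S_p` that are `η*`-related to some element of `S_{p+1}` form an ideal
lying between `S_{p+1}` and `S_p`, because `η*` is a congruence and both `S_p` and `S_{p+1}`
are ideals. It contains `a ∉ S_{p+1}`, so by maximality of the principal series it is all
of `S_p`. -/

section Ideal

variable {S : Type*} [Semigroup S]

theorem isIdeal_empty : IsIdeal S ∅ := fun _ _ hx => absurd hx (Set.notMem_empty _)

theorem IsIdeal.inter {I J : Set S} (hI : IsIdeal S I) (hJ : IsIdeal S J) :
    IsIdeal S (I ∩ J) :=
  fun s x hx => ⟨⟨(hI s x hx.1).1, (hJ s x hx.2).1⟩, ⟨(hI s x hx.1).2, (hJ s x hx.2).2⟩⟩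

theorem IsIdeal.setOf_exists_con {I : Set S} (hI : IsIdeal S I) (c : Con S) :
    IsIdeal S {s | ∃ y ∈ I, c s y} := by
  rintro t s ⟨y, hy, hsy⟩
  exact ⟨⟨t * y, (hI t y hy).1, c.mul (c.refl t) hsy⟩,
    ⟨y * t, (hI t y hy).2, c.mul hsy (c.refl t)⟩⟩

end Ideal

namespace PrincipalSeries

variable {S : Type*} [Semigroup S] (PS : PrincipalSeries S) {p : ℕ}

theorem isIdeal_C_succ (hpo : p ≤ PS.o) : IsIdeal S (PS.C (p + 1)) := by
  rcases hpo.lt_or_eq with hlt | rfl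
  · exact PS.isIdeal (p + 1) (by omega) hlt
  · exact PS.last ▸ isIdeal_empty

theorem forall_exists_con_of_exists (c : Con S) (hp1 : 1 ≤ p) (hpo : p ≤ PS.o)
    {a b : S} (ha : a ∈ PS.C p \ PS.C (p + 1)) (hb : b ∈ PS.C (p + 1)) (hab : c a b) :
    ∀ x ∈ PS.C p \ PS.C (p + 1), ∃ y ∈ PS.C (p + 1), c x y := by
  intro x hx
  set T := PS.C p ∩ {s | ∃ y ∈ PS.C (p + 1), c s y}
  have hT : IsIdeal S T :=
    (PS.isIdeal p hp1 hpo).inter ((PS.isIdeal_C_succ hpo).setOf_exists_con c)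
  have hsuccT : PS.C (p + 1) ⊆ T :=
    fun y hy => ⟨(PS.strict p hp1 hpo).subset hy, y, hy, c.refl y⟩
  rcases PS.max p hp1 hpo T hT hsuccT Set.inter_subset_left with hTeq | hTeq
  · exact absurd (hTeq ▸ (⟨ha.1, b, hb, hab⟩ : a ∈ T)) ha.2
  · exact (hTeq.symm ▸ hx.1 : x ∈ T).2

end PrincipalSeries

theorem etaStar_into_ideal_of_exists_general (S : Type*) [Semigroup S]
    (PS : PrincipalSeries S) (p : ℕ) (hp1 : 1 ≤ p) (hpo : p ≤ PS.o)
    (a : S) (ha : a ∈ PS.C p \ PS.C (p + 1))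
    (b : S) (hb : b ∈ PS.C (p + 1)) (hab : etaStar S a b) :
    ∀ x ∈ PS.C p \ PS.C (p + 1), ∃ y ∈ PS.C (p + 1), etaStar S x y :=
  PS.forall_exists_con_of_exists (etaStar S) hp1 hpo ha hb hab

/-- if some element of a non-null principal factor `S_p∖S_{p+1}`
is `η*`-related to an element of `S_{p+1}`, then every element of
`S_p∖S_{p+1}` is `η*`-related to some element of `S_{p+1}`. -/
theorem etaStar_into_ideal_of_exists (S : Type*) [Semigroup S] [Finite S]
    (PS : PrincipalSeries S) (p : ℕ) (hp1 : 1 ≤ p) (hpo : p ≤ PS.o)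
    (hnonnull : ¬ ∀ x ∈ PS.C p, ∀ y ∈ PS.C p, x * y ∈ PS.C (p + 1))
    (a : S) (ha : a ∈ PS.C p \ PS.C (p + 1))
    (b : S) (hb : b ∈ PS.C (p + 1)) (hab : etaStar S a b) :
    ∀ x ∈ PS.C p \ PS.C (p + 1), ∃ y ∈ PS.C (p + 1), etaStar S x y :=
  etaStar_into_ideal_of_exists_general S PS p hp1 hpo a ha b hb hab
end
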